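/- arXiv:0709.1556 — 7 statements merged into one kernel-verified Lean document; each statement's English description precedes it below -/
import Mathlib

section
/- Let n be a positive integer and ξ a complex non-real algebraic number of degree greater than n. For μ ∈ ℂ*, let V_n(μ,ξ) be the ℚ-vector space of polynomials f ∈ ℚ[X] of degree at most n with μ·f(ξ) ∈ ℝ. If μ₀, μ ∈ ℂ* both satisfy dim V_n(μ₀,ξ) > (n+1)/2 and dim V_n(μ,ξ) > (n+1)/2, then V_n(μ,ξ) = V_n(μ₀,ξ). -/
open Polynomial

/-- The ℚ-vector space of polynomials `f ∈ ℚ[X]` of degree at most `n`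
with `μ * f(ξ) ∈ ℝ`. -/
noncomputable def Vspace (n : ℕ) (μ ξ : ℂ) : Submodule ℚ ℚ[X] where
  carrier := {f | f.natDegree ≤ n ∧ ∃ r : ℝ, μ * aeval ξ f = (r : ℂ)}
  zero_mem' := ⟨by simp, 0, by simp⟩
  add_mem' := by
    rintro f g ⟨hf, r, hr⟩ ⟨hg, s, hs⟩
    refine ⟨(natDegree_add_le f g).trans (by simp [hf, hg]), r + s, ?_⟩
    push_cast
    rw [map_add, mul_add, hr, hs]
  smul_mem' := by
    rintro c f ⟨hf, r, hr⟩
    refine ⟨(natDegree_smul_le c f).trans hf, c * r, ?_⟩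
    rw [map_smul, Algebra.mul_smul_comm, hr, Rat.smul_def]
    push_cast
    ring

/-- `t_n(ξ)`: the maximum over nonzero `μ ∈ ℂ` of `dim_ℚ V_n(μ,ξ)`. -/
noncomputable def tdeg (n : ℕ) (ξ : ℂ) : ℕ :=
  sSup {d : ℕ | ∃ μ : ℂ, μ ≠ 0 ∧ d = Module.finrank ℚ (Vspace n μ ξ)}

/-! Any two subspaces of the `(n+1)`-dimensional space of polynomials of degree `≤ n`, each of
dimension `> (n+1)/2`, meet in a nonzero `f`. Since `deg f ≤ n < deg ξ`, `f(ξ) ≠ 0`, and both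
`μ f(ξ)` and `μ₀ f(ξ)` are real, so `μ / μ₀` is real. Multiplying `μ₀` by a nonzero real number
does not change `V_n(μ₀, ξ)`. -/

open Module

namespace Polynomial

variable (K : Type*) [Field K] (m : ℕ)

instance finite_degreeLT : Module.Finite K (degreeLT K m) :=
  Module.Finite.equiv (degreeLTEquiv K m).symm

theorem finrank_degreeLT : finrank K (degreeLT K m) = m := by
  simp [LinearEquiv.finrank_eq (degreeLTEquiv K m)]

end Polynomial

theorem Submodule.inf_ne_bot_of_finrank_lt_add {K V : Type*} [DivisionRing K] [AddCommGroup V]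
    [Module K V] {s t W : Submodule K V} [FiniteDimensional K W] (hs : s ≤ W) (ht : t ≤ W)
    (hdim : finrank K W < finrank K s + finrank K t) : s ⊓ t ≠ ⊥ := by
  have : FiniteDimensional K s := Submodule.finiteDimensional_of_le hs
  have : FiniteDimensional K t := Submodule.finiteDimensional_of_le ht
  intro hbot
  have hsup : finrank K ↥(s ⊔ t) ≤ finrank K W := Submodule.finrank_mono (sup_le hs ht)
  have hsum := Submodule.finrank_sup_add_finrank_inf_eq s t
  rw [hbot, finrank_bot] at hsum
  omega

theorem aeval_ne_zero_of_natDegree_lt_minpoly {A B : Type*} [Field A] [Ring B] [Algebra A B]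
    {x : B} {f : A[X]} (hf : f ≠ 0) (hdeg : f.natDegree < (minpoly A x).natDegree) :
    aeval x f ≠ 0 := fun hzero =>
  (natDegree_le_of_dvd (minpoly.dvd A x hzero) hf).not_gt hdeg

theorem Vspace_le_degreeLT (n : ℕ) (μ ξ : ℂ) : Vspace n μ ξ ≤ degreeLT ℚ (n + 1) :=
  fun f hf => mem_degreeLT.2 <| (degree_le_of_natDegree_le hf.1).trans_lt <| by
    exact_mod_cast n.lt_succ_self

theorem Vspace_ofReal_mul (n : ℕ) (ξ μ : ℂ) {t : ℝ} (ht : t ≠ 0) :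
    Vspace n (t * μ) ξ = Vspace n μ ξ := by
  ext f
  refine and_congr_right fun _ => ⟨fun ⟨r, hr⟩ => ⟨r / t, ?_⟩, fun ⟨r, hr⟩ => ⟨t * r, ?_⟩⟩
  · have ht' : (t : ℂ) ≠ 0 := Complex.ofReal_ne_zero.2 ht
    rw [Complex.ofReal_div, eq_div_iff ht', ← hr]
    ring
  · rw [Complex.ofReal_mul, ← hr]
    ring

theorem Vspace_eq_of_aeval_ne_zero {n : ℕ} {μ μ₀ ξ : ℂ} (hμ : μ ≠ 0) (hμ₀ : μ₀ ≠ 0)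
    {f : ℚ[X]} (hf : f ∈ Vspace n μ ξ ⊓ Vspace n μ₀ ξ) (hfξ : aeval ξ f ≠ 0) :
    Vspace n μ ξ = Vspace n μ₀ ξ := by
  obtain ⟨⟨-, r, hr⟩, ⟨-, s, hs⟩⟩ := hf
  have hs0 : (s : ℂ) ≠ 0 := hs ▸ mul_ne_zero hμ₀ hfξ
  have hratio : μ = ((r / s : ℝ) : ℂ) * μ₀ := by
    rw [Complex.ofReal_div, ← hr, ← hs]
    field_simp
  have ht : r / s ≠ 0 := by
    rintro hzero
    rw [hzero, Complex.ofReal_zero, zero_mul] at hratio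
    exact hμ hratio
  rw [hratio, Vspace_ofReal_mul n ξ μ₀ ht]

theorem uniqueness_of_maximal_Vspace_general (n : ℕ) (ξ : ℂ)
    (hdeg : n < (minpoly ℚ ξ).natDegree)
    (μ₀ μ : ℂ) (hμ₀ : μ₀ ≠ 0) (hμ : μ ≠ 0)
    (h₀ : n + 1 < 2 * Module.finrank ℚ (Vspace n μ₀ ξ))
    (h : n + 1 < 2 * Module.finrank ℚ (Vspace n μ ξ)) :
    Vspace n μ ξ = Vspace n μ₀ ξ := by
  have hdim : finrank ℚ (degreeLT ℚ (n + 1)) <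
      finrank ℚ (Vspace n μ ξ) + finrank ℚ (Vspace n μ₀ ξ) := by
    rw [finrank_degreeLT]
    omega
  obtain ⟨f, hf, hf0⟩ := Submodule.exists_mem_ne_zero_of_ne_bot <|
    Submodule.inf_ne_bot_of_finrank_lt_add (Vspace_le_degreeLT n μ ξ)
      (Vspace_le_degreeLT n μ₀ ξ) hdim
  have hfξ : aeval ξ f ≠ 0 :=
    aeval_ne_zero_of_natDegree_lt_minpoly hf0 (hf.1.1.trans_lt hdeg)
  exact Vspace_eq_of_aeval_ne_zero hμ hμ₀ hf hfξ

theorem uniqueness_of_maximal_Vspace (n : ℕ) (hn : 0 < n) (ξ : ℂ)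
    (hξreal : ξ.im ≠ 0) (hξalg : IsAlgebraic ℚ ξ)
    (hdeg : n < (minpoly ℚ ξ).natDegree)
    (μ₀ μ : ℂ) (hμ₀ : μ₀ ≠ 0) (hμ : μ ≠ 0)
    (h₀ : n + 1 < 2 * Module.finrank ℚ (Vspace n μ₀ ξ))
    (h : n + 1 < 2 * Module.finrank ℚ (Vspace n μ ξ)) :
    Vspace n μ ξ = Vspace n μ₀ ξ :=
  uniqueness_of_maximal_Vspace_general n ξ hdeg μ₀ μ hμ₀ hμ h₀ h
end

section
/- Let n be a positive integer, ξ a complex non-real algebraic number of degree greater than n, and μ₀ ∈ ℂ* with dim_ℚ V_n(μ₀,ξ) > (n+1)/2. Then the ℚ-vector spaces V_n(μ₀,ξ) and X·V_n(μ₀,ξ) intersect trivially, i.e., V_n(μ₀,ξ) ∩ X·V_n(μ₀,ξ) = {0}. -/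
open Polynomial

theorem Complex.im_eq_zero_of_mul_ofReal_eq_ofReal {z : ℂ} {r s : ℝ} (hs : s ≠ 0)
    (h : z * s = r) : z.im = 0 := by
  have him := congrArg Complex.im h
  rw [Complex.im_mul_ofReal, Complex.ofReal_im] at him
  exact (mul_eq_zero.mp him).resolve_right hs

theorem eq_zero_of_aeval_eq_zero_of_natDegree_lt_minpoly {A B : Type*} [Field A] [Ring B]
    [Algebra A B] {x : B} {p : A[X]} (hp : aeval x p = 0)
    (hdeg : p.natDegree < (minpoly A x).natDegree) : p = 0 := by
  by_contra hp0
  exact (natDegree_le_natDegree (minpoly.degree_le_of_ne_zero A x hp0 hp)).not_gt hdeg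

theorem mem_Vspace {n : ℕ} {μ ξ : ℂ} {f : ℚ[X]} :
    f ∈ Vspace n μ ξ ↔ f.natDegree ≤ n ∧ ∃ r : ℝ, μ * aeval ξ f = r :=
  Iff.rfl

/-- If `μ g(ξ)` and `μ ξ g(ξ)` are both real and `g(ξ) ≠ 0`, their quotient `ξ` is real. -/
theorem aeval_eq_zero_of_mem_Vspace_of_X_mul_mem_Vspace {n m : ℕ} {μ ξ : ℂ} {g : ℚ[X]}
    (hμ : μ ≠ 0) (hξ : ξ.im ≠ 0) (hg : g ∈ Vspace n μ ξ) (hXg : X * g ∈ Vspace m μ ξ) :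
    aeval ξ g = 0 := by
  obtain ⟨-, s, hs⟩ := mem_Vspace.mp hg
  obtain ⟨-, r, hr⟩ := mem_Vspace.mp hXg
  by_contra hg0
  have hs0 : s ≠ 0 := by
    rintro rfl
    exact mul_ne_zero hμ hg0 (by simpa using hs)
  refine hξ (Complex.im_eq_zero_of_mul_ofReal_eq_ofReal (r := r) hs0 ?_)
  rw [← hs, ← hr, map_mul, aeval_X]
  ring

theorem Vspace_inf_X_mul_Vspace_eq_bot_general (n : ℕ) (ξ : ℂ)
    (hξreal : ξ.im ≠ 0)
    (hdeg : n < (minpoly ℚ ξ).natDegree)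
    (μ₀ : ℂ) (hμ₀ : μ₀ ≠ 0) :
    Vspace n μ₀ ξ ⊓ (Vspace n μ₀ ξ).map (LinearMap.mulLeft ℚ (X : ℚ[X])) = ⊥ := by
  rw [eq_bot_iff]
  rintro _ ⟨hXg, g, hg, rfl⟩
  have hg0 : aeval ξ g = 0 := aeval_eq_zero_of_mem_Vspace_of_X_mul_mem_Vspace hμ₀ hξreal hg hXg
  have hgdeg : g.natDegree < (minpoly ℚ ξ).natDegree := (mem_Vspace.mp hg).1.trans_lt hdeg
  rw [Submodule.mem_bot, LinearMap.mulLeft_apply,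
    eq_zero_of_aeval_eq_zero_of_natDegree_lt_minpoly hg0 hgdeg, mul_zero]

theorem Vspace_inf_X_mul_Vspace_eq_bot (n : ℕ) (hn : 0 < n) (ξ : ℂ)
    (hξreal : ξ.im ≠ 0) (hξalg : IsAlgebraic ℚ ξ)
    (hdeg : n < (minpoly ℚ ξ).natDegree)
    (μ₀ : ℂ) (hμ₀ : μ₀ ≠ 0)
    (h₀ : n + 1 < 2 * Module.finrank ℚ (Vspace n μ₀ ξ)) :
    Vspace n μ₀ ξ ⊓ (Vspace n μ₀ ξ).map (LinearMap.mulLeft ℚ (X : ℚ[X])) = ⊥ :=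
  Vspace_inf_X_mul_Vspace_eq_bot_general n ξ hξreal hdeg μ₀ hμ₀
end

section
/- Let ξ be a complex non-real algebraic number of degree d > 1. Then t_{d-1}(ξ) ≤ d/2, where t_{d-1}(ξ) is the maximum over μ ∈ ℂ* of the dimension of the space of rational polynomials f of degree at most d−1 with μ·f(ξ) real. -/
/-!
Evaluation at `ξ` embeds `V_{d-1}(μ, ξ)` into `K = ℚ(ξ)`, since no nonzero polynomial of degree
less than `d` vanishes at `ξ`. Dividing by a fixed nonzero element `w` of the image maps it into
`K ∩ ℝ`, because `v / w = (μ v) / (μ w)` is real. As `ξ` is not real, `K ∩ ℝ` is a proper subfield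
of `K`, so its degree is a proper divisor of `d` and `dim V ≤ [K ∩ ℝ : ℚ] ≤ d / 2`.
-/

open Polynomial

open Module IntermediateField

theorem Submodule.finrank_le_finrank_map_of_disjoint_ker {K M N : Type*} [DivisionRing K]
    [AddCommGroup M] [Module K M] [AddCommGroup N] [Module K N] (f : M →ₗ[K] N)
    {V : Submodule K M} (hV : Disjoint V (LinearMap.ker f)) :
    finrank K V ≤ finrank K (V.map f) := by
  rw [← LinearMap.range_domRestrict,
    LinearMap.finrank_range_of_inj (LinearMap.injective_domRestrict_iff.mpr hV)]

namespace IntermediateField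

variable {F E : Type*} [Field F] [Field E] [Algebra F E]

theorem two_mul_finrank_le_of_lt {L K : IntermediateField F E} [FiniteDimensional F K]
    (h : L < K) : 2 * finrank F L ≤ finrank F K := by
  obtain ⟨k, hk⟩ := finrank_dvd_of_le_right h.le
  have hlt : finrank F L < finrank F K :=
    (finrank_le_of_le_right h.le).lt_of_ne (mt (eq_of_le_of_finrank_eq h.le) h.ne)
  have hpos : 0 < finrank F K := finrank_pos
  have hk2 : 2 ≤ k := by
    rcases k with _ | _ | k <;> simp_all
  rw [hk, mul_comm]
  exact Nat.mul_le_mul_left _ hk2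

theorem finrank_submodule_le_of_div_mem {W : Submodule F E} {L : IntermediateField F E}
    [FiniteDimensional F L] (hW : ∀ v ∈ W, ∀ w ∈ W, v / w ∈ L) :
    finrank F W ≤ finrank F L := by
  rcases eq_or_ne W ⊥ with rfl | hW0
  · simp
  obtain ⟨w, hw, hw0⟩ := W.exists_mem_ne_zero_of_ne_bot hW0
  have hmap : W.map (LinearMap.mulRight F w⁻¹) ≤ Subalgebra.toSubmodule L.toSubalgebra := by
    rintro _ ⟨v, hv, rfl⟩
    simpa [div_eq_mul_inv] using hW v hv w hw
  calc finrank F W = finrank F (W.map (LinearMap.mulRight F w⁻¹)) :=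
        (LinearEquiv.finrank_eq (Submodule.equivMapOfInjective _
          (mul_left_injective₀ (inv_ne_zero hw0)) W))
    _ ≤ finrank F L := Submodule.finrank_mono hmap

end IntermediateField

theorem disjoint_Vspace_ker_aeval {ξ : ℂ} (hξ : IsIntegral ℚ ξ) (μ : ℂ) :
    Disjoint (Vspace ((minpoly ℚ ξ).natDegree - 1) μ ξ) (LinearMap.ker (aeval ξ).toLinearMap) := by
  rw [Submodule.disjoint_def]
  intro f ⟨hdeg, _⟩ hker
  by_contra hf
  have := natDegree_le_of_dvd (minpoly.dvd ℚ ξ hker) hf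
  have := minpoly.natDegree_pos hξ
  omega

theorem aeval_div_aeval_mem_fieldRange_ofReal {n : ℕ} {μ ξ : ℂ} (hμ : μ ≠ 0) {f g : ℚ[X]}
    (hf : f ∈ Vspace n μ ξ) (hg : g ∈ Vspace n μ ξ) :
    aeval ξ f / aeval ξ g ∈ (Complex.ofRealAm.restrictScalars ℚ).fieldRange := by
  obtain ⟨-, r, hr⟩ := hf
  obtain ⟨-, s, hs⟩ := hg
  refine ⟨r / s, ?_⟩
  rw [← mul_div_mul_left _ _ hμ, hr, hs]
  simp

theorem two_mul_finrank_Vspace_le {ξ : ℂ} (hξreal : ξ.im ≠ 0) (hξ : IsIntegral ℚ ξ) {μ : ℂ}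
    (hμ : μ ≠ 0) :
    2 * finrank ℚ (Vspace ((minpoly ℚ ξ).natDegree - 1) μ ξ) ≤ (minpoly ℚ ξ).natDegree := by
  set V := Vspace ((minpoly ℚ ξ).natDegree - 1) μ ξ
  set R := (Complex.ofRealAm.restrictScalars ℚ).fieldRange
  have : FiniteDimensional ℚ ℚ⟮ξ⟯ := adjoin.finiteDimensional hξ
  have : FiniteDimensional ℚ ↥(ℚ⟮ξ⟯ ⊓ R) :=
    .of_injective (inclusion inf_le_left).toLinearMap (inclusion_injective inf_le_left)
  have hdiv : ∀ v ∈ V.map (aeval ξ).toLinearMap, ∀ w ∈ V.map (aeval ξ).toLinearMap,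
      v / w ∈ ℚ⟮ξ⟯ ⊓ R := by
    rintro _ ⟨f, hf, rfl⟩ _ ⟨g, hg, rfl⟩
    have haeval (p : ℚ[X]) : aeval ξ p ∈ ℚ⟮ξ⟯ :=
      algebra_adjoin_le_adjoin ℚ {ξ} (aeval_mem_adjoin_singleton ℚ ξ)
    exact ⟨div_mem (haeval f) (haeval g), aeval_div_aeval_mem_fieldRange_ofReal hμ hf hg⟩
  have hlt : ℚ⟮ξ⟯ ⊓ R < ℚ⟮ξ⟯ := by
    refine inf_lt_left.mpr fun h ↦ hξreal ?_
    obtain ⟨r, hr⟩ := h (mem_adjoin_simple_self ℚ ξ)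
    simp [← hr]
  calc 2 * finrank ℚ V ≤ 2 * finrank ℚ (V.map (aeval ξ).toLinearMap) :=
        Nat.mul_le_mul_left 2
          (Submodule.finrank_le_finrank_map_of_disjoint_ker _ (disjoint_Vspace_ker_aeval hξ μ))
    _ ≤ 2 * finrank ℚ ↥(ℚ⟮ξ⟯ ⊓ R) :=
        Nat.mul_le_mul_left 2 (finrank_submodule_le_of_div_mem hdiv)
    _ ≤ finrank ℚ ℚ⟮ξ⟯ := two_mul_finrank_le_of_lt hlt
    _ = (minpoly ℚ ξ).natDegree := adjoin.finrank hξ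

theorem tdeg_le_half_degree_general (ξ : ℂ) (hξreal : ξ.im ≠ 0) (hξalg : IsAlgebraic ℚ ξ)
    (d : ℕ) (hd : d = (minpoly ℚ ξ).natDegree) :
    2 * tdeg (d - 1) ξ ≤ d := by
  subst hd
  set S := {k : ℕ | ∃ μ : ℂ, μ ≠ 0 ∧ k = finrank ℚ (Vspace ((minpoly ℚ ξ).natDegree - 1) μ ξ)}
  have hbound : ∀ k ∈ S, 2 * k ≤ (minpoly ℚ ξ).natDegree := by
    rintro k ⟨μ, hμ, rfl⟩
    exact two_mul_finrank_Vspace_le hξreal hξalg.isIntegral hμ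
  have hbdd : BddAbove S := ⟨_, fun k hk ↦ (Nat.le_mul_of_pos_left k two_pos).trans (hbound k hk)⟩
  exact hbound _ (Nat.sSup_mem ⟨_, 1, one_ne_zero, rfl⟩ hbdd)

theorem tdeg_le_half_degree (ξ : ℂ) (hξreal : ξ.im ≠ 0) (hξalg : IsAlgebraic ℚ ξ)
    (d : ℕ) (hd : d = (minpoly ℚ ξ).natDegree) (hd1 : 1 < d) :
    2 * tdeg (d - 1) ξ ≤ d :=
  tdeg_le_half_degree_general ξ hξreal hξalg d hd
end

section
/- Let n be an even positive integer and γ a positive real algebraic number such that ξ := √(−γ) = i·√γ has degree greater than n over ℚ. Then the space V_n(1,ξ) of rational polynomials f of degree at most n with f(ξ) ∈ ℝ is exactly the space of even polynomials of degree at most n, and hence has dimension (n+2)/2. -/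
open Polynomial

/-- The space of even rational polynomials of degree at most n. -/
noncomputable def evenPolySpace (n : ℕ) : Submodule ℚ ℚ[X] where
  carrier := {f | f.natDegree ≤ n ∧ ∀ i, Odd i → f.coeff i = 0}
  zero_mem' := ⟨by simp, by simp⟩
  add_mem' := by
    rintro f g ⟨hf, hf'⟩ ⟨hg, hg'⟩
    exact ⟨(natDegree_add_le f g).trans (by simp [hf, hg]),
      fun i hi => by simp [coeff_add, hf' i hi, hg' i hi]⟩
  smul_mem' := by
    rintro c f ⟨hf, hf'⟩
    exact ⟨(natDegree_smul_le c f).trans hf,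
      fun i hi => by simp [coeff_smul, hf' i hi]⟩

/-! Since `ξ` is purely imaginary, `conj (f ξ) = f (-ξ)` for rational `f`, so `f ξ` is real exactly
when `ξ` is a root of `f (-X) - f`. This polynomial has degree at most `n`, below the degree of `ξ`,
so it vanishes: `f` is even. The even polynomials of degree `≤ 2m` are the image of those of
degree `≤ m` under the injective map `X ↦ X²`, hence form a space of dimension `m + 1`. -/

namespace Polynomial

lemma coeff_comp_neg_X {R : Type*} [CommRing R] (f : R[X]) (i : ℕ) :
    (f.comp (-X)).coeff i = (-1) ^ i * f.coeff i := by
  induction f using Polynomial.induction_on' with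
  | add p q hp hq => simp only [add_comp, coeff_add, hp, hq, mul_add]
  | monomial k c =>
    rw [← C_mul_X_pow_eq_monomial, mul_comp, C_comp, pow_comp, X_comp, neg_pow, ← C_1, ← C_neg,
      ← C_pow, mul_left_comm, coeff_C_mul, coeff_C_mul, coeff_X_pow]
    split_ifs with h
    · subst h; ring
    · simp

lemma comp_neg_X_eq_self_iff {R : Type*} [CommRing R] [NoZeroDivisors R] [CharZero R]
    {f : R[X]} : f.comp (-X) = f ↔ ∀ i, Odd i → f.coeff i = 0 := by
  simp only [Polynomial.ext_iff, coeff_comp_neg_X]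
  refine ⟨fun h i hi => ?_, fun h i => ?_⟩
  · simpa [hi.neg_one_pow, CharZero.neg_eq_self_iff] using h i
  · rcases Nat.even_or_odd i with hi | hi
    · rw [hi.neg_one_pow, one_mul]
    · rw [h i hi, mul_zero]

lemma expand_contract_of_coeff_eq_zero {R : Type*} [CommSemiring R] {p : ℕ} (hp : p ≠ 0)
    {f : R[X]} (hf : ∀ i, ¬ p ∣ i → f.coeff i = 0) : expand R p (contract p f) = f := by
  ext i
  rw [coeff_expand (Nat.pos_of_ne_zero hp)]
  split_ifs with h
  · rw [coeff_contract hp, Nat.div_mul_cancel h]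
  · exact (hf i h).symm

end Polynomial

lemma minpoly.eq_zero_of_aeval_eq_zero_of_natDegree_lt {K A : Type*} [Field K] [Ring A]
    [Algebra K A] {x : A} {p : K[X]} (hp : Polynomial.aeval x p = 0)
    (hdeg : p.natDegree < (minpoly K x).natDegree) : p = 0 := by
  by_contra hp0
  exact hdeg.not_ge (natDegree_le_natDegree (minpoly.degree_le_of_ne_zero K x hp0 hp))

lemma mem_evenPolySpace_iff {n : ℕ} {f : ℚ[X]} :
    f ∈ evenPolySpace n ↔ f.natDegree ≤ n ∧ f.comp (-X) = f := by
  rw [comp_neg_X_eq_self_iff]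
  rfl

lemma evenPolySpace_two_mul (m : ℕ) :
    evenPolySpace (2 * m) = (degreeLE ℚ m).map (expand ℚ 2).toLinearMap := by
  ext f
  constructor
  · rintro ⟨hdeg, hodd⟩
    have hf : expand ℚ 2 (contract 2 f) = f :=
      expand_contract_of_coeff_eq_zero two_ne_zero fun i hi => hodd i (Nat.odd_iff.mpr (by omega))
    have hdeg' : (contract 2 f).natDegree * 2 = f.natDegree := by
      rw [← natDegree_expand, hf]
    refine ⟨contract 2 f, ?_, hf⟩
    rw [SetLike.mem_coe, mem_degreeLE, ← natDegree_le_iff_degree_le]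
    omega
  · rintro ⟨g, hg, rfl⟩
    rw [SetLike.mem_coe, mem_degreeLE, ← natDegree_le_iff_degree_le] at hg
    refine ⟨?_, fun i hi => ?_⟩
    · rw [AlgHom.toLinearMap_apply, natDegree_expand]
      omega
    · obtain ⟨k, rfl⟩ := hi
      rw [AlgHom.toLinearMap_apply, coeff_expand two_pos, if_neg (by omega)]

lemma finrank_evenPolySpace_two_mul (m : ℕ) :
    Module.finrank ℚ (evenPolySpace (2 * m)) = m + 1 := by
  rw [evenPolySpace_two_mul, ← degreeLT_succ_eq_degreeLE,
    ← (Submodule.equivMapOfInjective _ (expand_injective two_pos) _).finrank_eq,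
    Module.finrank_eq_card_basis (degreeLT.basis ℚ (m + 1)), Fintype.card_fin]

lemma mem_Vspace_one_iff {n : ℕ} {ξ : ℂ} {f : ℚ[X]} :
    f ∈ Vspace n 1 ξ ↔ f.natDegree ≤ n ∧ starRingEnd ℂ (aeval ξ f) = aeval ξ f := by
  show (f.natDegree ≤ n ∧ ∃ r : ℝ, 1 * aeval ξ f = r) ↔ _
  rw [Complex.conj_eq_iff_real]
  simp only [one_mul, eq_comm]

lemma aeval_comp_neg_X_of_conj_eq_neg {ξ : ℂ} (hξ : starRingEnd ℂ ξ = -ξ) (f : ℚ[X]) :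
    aeval ξ (f.comp (-X)) = starRingEnd ℂ (aeval ξ f) := by
  rw [aeval_comp, map_neg, aeval_X, ← hξ]
  exact aeval_algHom_apply (Complex.conjAe.toAlgHom.restrictScalars ℚ) ξ f

lemma Vspace_one_eq_evenPolySpace {n : ℕ} {ξ : ℂ} (hξ : starRingEnd ℂ ξ = -ξ)
    (hdeg : n < (minpoly ℚ ξ).natDegree) : Vspace n 1 ξ = evenPolySpace n := by
  ext f
  rw [mem_Vspace_one_iff, mem_evenPolySpace_iff, and_congr_right_iff]
  intro hf
  have hsub : (f.comp (-X) - f).natDegree ≤ n := by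
    refine (natDegree_sub_le _ _).trans (max_le ?_ hf)
    rwa [natDegree_eq_of_degree_eq degree_comp_neg_X]
  rw [← aeval_comp_neg_X_of_conj_eq_neg hξ, ← sub_eq_zero, ← map_sub,
    ← sub_eq_zero (a := f.comp _)]
  exact ⟨fun h => minpoly.eq_zero_of_aeval_eq_zero_of_natDegree_lt h (hsub.trans_lt hdeg),
    fun h => by rw [h, map_zero]⟩

theorem Vspace_sqrt_neg_eq_even_polys_general (n : ℕ) (hne : Even n)
    (γ : ℝ) (ξ : ℂ)
    (hξ : ξ = Complex.I * (Real.sqrt γ : ℂ))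
    (hdeg : n < (minpoly ℚ ξ).natDegree) :
    Vspace n 1 ξ = evenPolySpace n ∧
      2 * Module.finrank ℚ (Vspace n 1 ξ) = n + 2 := by
  have hconj : starRingEnd ℂ ξ = -ξ := by
    rw [hξ, map_mul, Complex.conj_I, Complex.conj_ofReal, neg_mul]
  have heq := Vspace_one_eq_evenPolySpace hconj hdeg
  obtain ⟨m, rfl⟩ := hne.two_dvd
  rw [heq, finrank_evenPolySpace_two_mul]
  exact ⟨rfl, by ring⟩

theorem Vspace_sqrt_neg_eq_even_polys (n : ℕ) (hn : 0 < n) (hne : Even n)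
    (γ : ℝ) (hγ : 0 < γ) (hγalg : IsAlgebraic ℚ (γ : ℝ)) (ξ : ℂ)
    (hξ : ξ = Complex.I * (Real.sqrt γ : ℂ))
    (hξalg : IsAlgebraic ℚ ξ) (hdeg : n < (minpoly ℚ ξ).natDegree) :
    Vspace n 1 ξ = evenPolySpace n ∧
      2 * Module.finrank ℚ (Vspace n 1 ξ) = n + 2 :=
  Vspace_sqrt_neg_eq_even_polys_general n hne γ ξ hξ hdeg
end

section
/- Let n be an even positive integer, a ∈ ℚ*, and ξ a complex non-real algebraic number of degree greater than n with ξ·ξ̄ = a. Then with μ := ξ^{−n/2}, a polynomial f = Σ_{i=0}^n c_i X^i ∈ ℚ[X] satisfies μ·f(ξ) ∈ ℝ if and only if a^{n/2}·c_i = a^{n−i}·c_{n−i} for i = 0,…,n. In particular, dim_ℚ V_n(μ,ξ) = (n+2)/2. -/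
open Polynomial

open Finset

theorem Vspace_of_rational_norm (n : ℕ) (hn : 0 < n) (hne : Even n)
    (a : ℚ) (ha : a ≠ 0) (ξ : ℂ)
    (hξreal : ξ.im ≠ 0) (hξalg : IsAlgebraic ℚ ξ)
    (hdeg : n < (minpoly ℚ ξ).natDegree)
    (hnorm : ξ * (starRingEnd ℂ) ξ = (a : ℂ)) :
    (∀ f : ℚ[X], f.natDegree ≤ n →
      ((∃ r : ℝ, ξ ^ (-(n / 2 : ℤ)) * aeval ξ f = (r : ℂ)) ↔
        ∀ i ≤ n, a ^ (n / 2) * f.coeff i = a ^ (n - i) * f.coeff (n - i))) ∧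
    2 * Module.finrank ℚ (Vspace n (ξ ^ (-(n / 2 : ℤ))) ξ) = n + 2 := by
  obtain ⟨m, hm⟩ := hne
  have hd2 : ((n : ℤ) / 2) = (m : ℤ) := by omega
  have hnd2 : n / 2 = m := by omega
  have hξ0 : ξ ≠ 0 := by
    rintro rfl
    rw [zero_mul] at hnorm
    exact ha (by exact_mod_cast hnorm.symm)
  have ha0 : (a : ℂ) ≠ 0 := by exact_mod_cast ha
  have hconj : (starRingEnd ℂ) ξ = (a : ℂ) * ξ⁻¹ := by
    field_simp
    linear_combination hnorm
  have hmu : ξ ^ (-(n / 2 : ℤ)) = (ξ ^ m)⁻¹ := by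
    rw [hd2, zpow_neg, zpow_natCast]
  have indep : ∀ g : ℚ[X], g.natDegree ≤ n → aeval ξ g = 0 → g = 0 := by
    intro g hgdeg hg0
    by_contra hg
    have h1 := minpoly.degree_le_of_ne_zero ℚ ξ hg hg0
    have h2 := natDegree_le_natDegree h1
    omega
  have indep' : ∀ d : ℕ → ℚ, (∑ i ∈ Finset.range (n+1), (d i : ℂ) * ξ ^ i) = 0 →
      ∀ i, i ≤ n → d i = 0 := by
    intro d hsum i hi
    set P : ℚ[X] := ∑ i ∈ Finset.range (n+1), C (d i) * X ^ i with hP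
    have hPdeg : P.natDegree ≤ n := by
      apply natDegree_sum_le_of_forall_le
      intro j hj
      simp only [Finset.mem_range] at hj
      exact (natDegree_C_mul_X_pow_le _ _).trans (by omega)
    have hPaeval : aeval ξ P = ∑ i ∈ Finset.range (n+1), (d i : ℂ) * ξ ^ i := by
      simp [hP]
    have hP0 := indep P hPdeg (by rw [hPaeval, hsum])
    have hc : P.coeff i = d i := by
      simp only [hP, finset_sum_coeff, coeff_C_mul, coeff_X_pow, mul_ite, mul_one, mul_zero]
      rw [Finset.sum_ite_eq]
      simp [Nat.lt_succ_iff, hi]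
    rw [hP0] at hc
    simpa using hc.symm
  have key : ∀ f : ℚ[X], f.natDegree ≤ n →
      ((∃ r : ℝ, ξ ^ (-(n / 2 : ℤ)) * aeval ξ f = (r : ℂ)) ↔
        ∀ i ≤ n, a ^ (n / 2) * f.coeff i = a ^ (n - i) * f.coeff (n - i)) := by
    intro f hf
    have hconjaeval : ∀ g : ℚ[X], (starRingEnd ℂ) (aeval ξ g) = aeval ((starRingEnd ℂ) ξ) g := by
      intro g
      induction g using Polynomial.induction_on with
      | C q => simp
      | add p q hp hq => simp [hp, hq]
      | monomial i q h =>
        simp only [map_mul, aeval_C, aeval_X_pow, pow_succ, ← mul_assoc] at h ⊢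
        simp [h]
    rw [← Complex.conj_eq_iff_real]
    have hflt : f.natDegree < n + 1 := by omega
    set c : ℕ → ℚ := fun i => f.coeff i with hc
    set d : ℕ → ℚ := fun j => a ^ (n - j) * c (n - j) - a ^ m * c j with hd
    set L : ℂ := ∑ j ∈ range (n+1), (d j : ℂ) * ξ ^ j with hL
    have hz : aeval ξ f = ∑ i ∈ range (n+1), (c i : ℂ) * ξ ^ i := by
      rw [aeval_eq_sum_range' hflt]
      exact Finset.sum_congr rfl fun i _ => by rw [Rat.smul_def]
    have hw2 : ξ ^ n * aeval ((starRingEnd ℂ) ξ) f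
        = ∑ i ∈ range (n+1), ((a ^ i * c i : ℚ) : ℂ) * ξ ^ (n - i) := by
      rw [hconj, aeval_eq_sum_range' hflt, Finset.mul_sum]
      refine Finset.sum_congr rfl fun i hi => ?_
      simp only [Finset.mem_range] at hi
      rw [Rat.smul_def, pow_sub₀ ξ hξ0 (by omega : i ≤ n)]
      push_cast
      field_simp
      have hξi : ξ ^ i * ξ⁻¹ ^ i = 1 := by rw [← mul_pow, mul_inv_cancel₀ hξ0, one_pow]
      simp only [hc]
      linear_combination ((f.coeff i : ℂ) * (a : ℂ) ^ i) * hξi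
    have hrefl : ∑ i ∈ range (n+1), ((a ^ i * c i : ℚ) : ℂ) * ξ ^ (n - i)
        = ∑ j ∈ range (n+1), ((a ^ (n - j) * c (n - j) : ℚ) : ℂ) * ξ ^ j := by
      rw [← Finset.sum_range_reflect]
      refine Finset.sum_congr rfl fun j hj => ?_
      simp only [Finset.mem_range] at hj
      have h1 : n + 1 - 1 - j = n - j := by omega
      have h2 : n - (n - j) = j := by omega
      rw [h1, h2]
    have hmain : (a:ℂ)^m * ξ^m *
        ((starRingEnd ℂ) (ξ ^ (-(n / 2 : ℤ)) * aeval ξ f) - ξ ^ (-(n / 2 : ℤ)) * aeval ξ f) = L := by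
      rw [map_mul, hconjaeval, hmu, map_inv₀, map_pow]
      have e1 : (a:ℂ)^m * ξ^m * ((((starRingEnd ℂ) ξ) ^ m)⁻¹ * aeval ((starRingEnd ℂ) ξ) f)
          = ξ ^ n * aeval ((starRingEnd ℂ) ξ) f := by
        rw [hconj, hm]
        field_simp
        have h3 : ξ ^ (m * 2) * ξ⁻¹ ^ m = ξ ^ m := by
          rw [pow_mul, inv_pow, sq, mul_assoc, mul_inv_cancel₀ (pow_ne_zero _ hξ0), mul_one]
        generalize aeval ((a : ℂ) / ξ) f = A
        linear_combination (-((a : ℂ) ^ m * A)) * h3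
      have e2 : (a:ℂ)^m * ξ^m * ((ξ ^ m)⁻¹ * aeval ξ f) = (a:ℂ)^m * aeval ξ f := by
        field_simp
      rw [mul_sub, e1, e2, hw2, hrefl, hz, Finset.mul_sum, hL, ← Finset.sum_sub_distrib]
      refine Finset.sum_congr rfl fun j hj => ?_
      simp only [hd]
      push_cast
      ring
    have hA : (a:ℂ)^m * ξ^m ≠ 0 := mul_ne_zero (pow_ne_zero _ ha0) (pow_ne_zero _ hξ0)
    constructor
    · intro hreal i hi
      have hL0 : L = 0 := by
        rw [← hmain, sub_eq_zero.mpr hreal, mul_zero]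
      have hdi := indep' d hL0 i hi
      simp only [hd] at hdi
      rw [hnd2]
      linarith [hdi]
    · intro hcoe
      have hL0 : L = 0 := by
        rw [hL]
        refine Finset.sum_eq_zero fun j hj => ?_
        simp only [Finset.mem_range] at hj
        have h1 := hcoe j (by omega)
        rw [hnd2] at h1
        have hdj : d j = 0 := by simp only [hd]; linarith
        rw [hdj]
        simp
      have h2 := (mul_eq_zero.mp (hmain.trans hL0)).resolve_left hA
      exact sub_eq_zero.mp h2
  refine ⟨key, ?_⟩
  set μ := ξ ^ (-(n / 2 : ℤ)) with hμdef
  have memV : ∀ f : ℚ[X], f ∈ Vspace n μ ξ ↔ (f.natDegree ≤ n ∧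
      ∀ i ≤ n, a ^ m * f.coeff i = a ^ (n - i) * f.coeff (n - i)) := by
    intro f
    constructor
    · rintro ⟨h1, h2⟩
      refine ⟨h1, ?_⟩
      have h3 := (key f h1).mp h2
      simpa [hnd2] using h3
    · rintro ⟨h1, h2⟩
      exact ⟨h1, (key f h1).mpr (by simpa [hnd2] using h2)⟩
  have hm1 : 1 ≤ m := by omega
  classical
  set p : Fin (m+1) → ℚ[X] := fun k =>
    if (k:ℕ) = 0 then X ^ m else X ^ (m + (k:ℕ)) + C (a ^ (k:ℕ)) * X ^ (m - (k:ℕ)) with hp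
  have hpmem : ∀ k : Fin (m+1), p k ∈ Vspace n μ ξ := by
    intro k
    have hkm : (k:ℕ) ≤ m := by omega
    rw [memV]
    by_cases hk : (k:ℕ) = 0
    · refine ⟨?_, ?_⟩
      · simp only [hp, hk, eq_self_iff_true, if_true, natDegree_X_pow]; omega
      · intro i hi
        simp only [hp, hk, eq_self_iff_true, if_true, coeff_X_pow]
        by_cases him : i = m
        · simp [him, (by omega : n - m = m)]
        · rw [if_neg him, if_neg (by omega : ¬ (n - i = m))]
          ring
    · have hk1 : 1 ≤ (k:ℕ) := Nat.pos_of_ne_zero hk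
      refine ⟨?_, ?_⟩
      · simp only [hp, if_neg hk]
        refine (natDegree_add_le _ _).trans ?_
        simp only [natDegree_X_pow]
        refine max_le (by omega) ((natDegree_C_mul_X_pow_le _ _).trans (by omega))
      · intro i hi
        simp only [hp, if_neg hk, coeff_add, coeff_C_mul, coeff_X_pow]
        by_cases h1 : i = m + (k:ℕ)
        · subst h1
          rw [if_pos rfl, if_neg (by omega : ¬ (m + (k:ℕ) = m - (k:ℕ))),
            if_neg (by omega : ¬ (n - (m + (k:ℕ)) = m + (k:ℕ))),
            if_pos (by omega : n - (m + (k:ℕ)) = m - (k:ℕ)),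
            (by omega : n - (m + (k:ℕ)) = m - (k:ℕ))]
          have e : a ^ m = a ^ (m - (k:ℕ)) * a ^ (k:ℕ) := by
            rw [← pow_add]
            congr 1
            omega
          linear_combination e
        · by_cases h2 : i = m - (k:ℕ)
          · subst h2
            rw [if_neg h1, if_pos rfl,
              if_pos (by omega : n - (m - (k:ℕ)) = m + (k:ℕ)),
              if_neg (by omega : ¬ (n - (m - (k:ℕ)) = m - (k:ℕ))),
              (by omega : n - (m - (k:ℕ)) = m + (k:ℕ))]
            have e : a ^ (m + (k:ℕ)) = a ^ m * a ^ (k:ℕ) := pow_add a m k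
            linear_combination -e
          · rw [if_neg h1, if_neg h2, if_neg (by omega : ¬ (n - i = m + (k:ℕ))),
              if_neg (by omega : ¬ (n - i = m - (k:ℕ)))]
            ring
  have hcoeffp : ∀ k j : Fin (m+1), (p k).coeff (m + (j:ℕ)) = if (j:ℕ) = (k:ℕ) then 1 else 0 := by
    intro k j
    by_cases hk : (k:ℕ) = 0
    · simp only [hp, hk, eq_self_iff_true, if_true, coeff_X_pow]
      by_cases hj : (j:ℕ) = 0 <;> simp [hj] <;> omega
    · have hk1 : 1 ≤ (k:ℕ) := Nat.pos_of_ne_zero hk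
      simp only [hp, if_neg hk, coeff_add, coeff_C_mul, coeff_X_pow]
      have : ¬ (m + (j:ℕ) = m - (k:ℕ)) := by omega
      by_cases hj : (j:ℕ) = (k:ℕ) <;> simp [hj, this] <;> omega
  let T : Vspace n μ ξ →ₗ[ℚ] (Fin (m+1) → ℚ) :=
    { toFun := fun f k => (f : ℚ[X]).coeff (m + (k:ℕ))
      map_add' := fun f g => by ext k; simp
      map_smul' := fun q f => by ext k; simp }
  have hTinj : Function.Injective T := by
    rw [injective_iff_map_eq_zero]
    intro f hf0
    obtain ⟨h1, h2⟩ := (memV f).mp f.2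
    have hhigh : ∀ j, m ≤ j → j ≤ n → (f : ℚ[X]).coeff j = 0 := by
      intro j hj1 hj2
      have := congrFun hf0 ⟨j - m, by omega⟩
      simpa [T, (by omega : m + (j - m) = j)] using this
    apply Subtype.ext
    apply Polynomial.ext
    intro j
    simp only [Submodule.coe_zero, coeff_zero]
    rcases lt_or_ge n j with hj | hj
    · exact coeff_eq_zero_of_natDegree_lt (lt_of_le_of_lt h1 hj)
    rcases le_or_gt m j with hj2 | hj2
    · exact hhigh j hj2 hj
    · have h3 := h2 j (by omega)
      have h4 : (f : ℚ[X]).coeff (n - j) = 0 := hhigh (n - j) (by omega) (by omega)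
      rw [h4, mul_zero] at h3
      exact (mul_eq_zero.mp h3).resolve_left (pow_ne_zero _ ha)
  have hTsurj : Function.Surjective T := by
    intro v
    refine ⟨⟨∑ k : Fin (m+1), v k • p k,
      sum_mem fun k _ => Submodule.smul_mem _ _ (hpmem k)⟩, ?_⟩
    ext j
    show (∑ k : Fin (m+1), v k • p k).coeff (m + (j:ℕ)) = v j
    rw [finset_sum_coeff]
    simp only [coeff_smul, hcoeffp, smul_eq_mul, mul_ite, mul_one, mul_zero, Fin.val_inj]
    simp [Finset.sum_ite_eq']
  have hfin : Module.finrank ℚ (Vspace n μ ξ) = m + 1 := by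
    rw [LinearEquiv.finrank_eq (LinearEquiv.ofBijective T ⟨hTinj, hTsurj⟩)]
    simp [Module.finrank_pi]
  rw [hfin]
  omega
end

section
/- Let ξ be a complex non-real algebraic number of degree greater than 2 with t_2(ξ) > 3/2 (i.e., there is μ ∈ ℂ* and two linearly independent rational polynomials f₁, f₂ of degree at most 2 with μ·f₁(ξ), μ·f₂(ξ) ∈ ℝ). Then 1, ξ + ξ̄, ξ·ξ̄ are linearly dependent over ℚ. -/
/-!
Take `μ ≠ 0` and linearly independent `f, g` of degree `≤ 2` with `μ f(ξ), μ g(ξ)` real. Then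
`f(ξ) g(ξ̄) = (μ f(ξ)) conj (μ g(ξ)) / |μ|²` is real, so `f(ξ) g(ξ̄) - f(ξ̄) g(ξ) = 0`. This antisymmetric
expression factors as `(ξ̄ - ξ) (x₂ - x₁ (ξ + ξ̄) + x₀ ξ ξ̄)`, where `x` is the cross product of the
coefficient vectors of `f` and `g`; it is nonzero by linear independence, and `ξ̄ ≠ ξ`.
-/

open Polynomial

open Matrix Module

theorem Nat.sSup_mem_of_ne_zero {s : Set ℕ} (h : sSup s ≠ 0) : sSup s ∈ s := by
  refine Nat.sSup_mem ?_ ?_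
  · by_contra hs
    exact h (by simp [Set.not_nonempty_iff_eq_empty.mp hs])
  · by_contra hs
    exact h (Nat.sSup_of_not_bddAbove hs)

theorem Submodule.exists_linearIndependent_pair_of_two_le_finrank {K V : Type*} [DivisionRing K]
    [AddCommGroup V] [Module K V] {p : Submodule K V} (h : 2 ≤ finrank K p) :
    ∃ f ∈ p, ∃ g ∈ p, LinearIndependent K ![f, g] := by
  obtain ⟨v, hv⟩ := exists_linearIndependent_of_le_finrank h
  refine ⟨v 0, (v 0).2, v 1, (v 1).2, ?_⟩
  have hpair : ![(v 0 : V), v 1] = p.subtype ∘ v := by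
    ext i : 1
    fin_cases i <;> rfl
  exact hpair ▸ hv.map' p.subtype p.ker_subtype

namespace Polynomial

variable {R : Type*} [CommRing R]

theorem mem_degreeLT_succ_of_natDegree_le {p : R[X]} {n : ℕ} (hp : p.natDegree ≤ n) :
    p ∈ degreeLT R (n + 1) := by
  rw [degreeLT_succ_eq_degreeLE, mem_degreeLE]
  exact natDegree_le_iff_degree_le.mp hp

theorem linearIndependent_coeff_of_mem_degreeLT {ι : Type*} {n : ℕ} {v : ι → R[X]}
    (hv : LinearIndependent R v) (hdeg : ∀ i, v i ∈ degreeLT R n) :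
    LinearIndependent R fun i (j : Fin n) ↦ (v i).coeff j := by
  have hv' : LinearIndependent R fun i ↦ (⟨v i, hdeg i⟩ : degreeLT R n) :=
    LinearIndependent.of_comp (degreeLT R n).subtype hv
  exact hv'.map' (degreeLTEquiv R n).toLinearMap (degreeLTEquiv R n).ker

theorem cross_coeff_ne_zero_of_linearIndependent {K : Type*} [Field K] {p q : K[X]}
    (hp : p.natDegree ≤ 2) (hq : q.natDegree ≤ 2) (hpq : LinearIndependent K ![p, q]) :
    (fun j : Fin 3 ↦ p.coeff j) ⨯₃ (fun j : Fin 3 ↦ q.coeff j) ≠ 0 := by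
  have hdeg : ∀ i, ![p, q] i ∈ degreeLT K 3 := by
    intro i
    fin_cases i
    exacts [mem_degreeLT_succ_of_natDegree_le hp, mem_degreeLT_succ_of_natDegree_le hq]
  have hcoeff : ![fun j : Fin 3 ↦ p.coeff j, fun j : Fin 3 ↦ q.coeff j] =
      fun i (j : Fin 3) ↦ (![p, q] i).coeff j := by
    funext i
    fin_cases i <;> rfl
  exact crossProduct_ne_zero_iff_linearIndependent.mpr
    (hcoeff ▸ linearIndependent_coeff_of_mem_degreeLT hpq hdeg)

theorem aeval_mul_aeval_sub_aeval_mul_aeval {A : Type*} [CommRing A] [Algebra R A] {p q : R[X]}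
    (hp : p.natDegree ≤ 2) (hq : q.natDegree ≤ 2) (z w : A) :
    let x := (fun j : Fin 3 ↦ p.coeff j) ⨯₃ (fun j : Fin 3 ↦ q.coeff j)
    aeval z p * aeval w q - aeval w p * aeval z q =
      (w - z) * (algebraMap R A (x 2) - algebraMap R A (x 1) * (z + w)
        + algebraMap R A (x 0) * (z * w)) := by
  simp only [aeval_eq_sum_range' (Nat.lt_succ_of_le hp), aeval_eq_sum_range' (Nat.lt_succ_of_le hq),
    Finset.sum_range_succ, Finset.sum_range_zero, Algebra.smul_def, cross_apply, cons_val,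
    cons_val_zero, cons_val_one, Fin.isValue, Fin.val_zero, Fin.val_one, Fin.val_two, map_sub,
    map_mul, pow_zero, pow_one, mul_one, zero_add]
  ring

end Polynomial

theorem Complex.mul_conj_eq_conj_mul_of_mul_eq_ofReal {μ u v : ℂ} {r s : ℝ} (hμ : μ ≠ 0)
    (hu : μ * u = r) (hv : μ * v = s) :
    u * (starRingEnd ℂ) v = (starRingEnd ℂ) u * v := by
  have huc : (starRingEnd ℂ) μ * (starRingEnd ℂ) u = r := by
    rw [← map_mul, hu, Complex.conj_ofReal]
  have hvc : (starRingEnd ℂ) μ * (starRingEnd ℂ) v = s := by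
    rw [← map_mul, hv, Complex.conj_ofReal]
  refine mul_left_cancel₀ (mul_ne_zero hμ ((_root_.map_ne_zero (starRingEnd ℂ)).mpr hμ)) ?_
  linear_combination ((starRingEnd ℂ) μ * (starRingEnd ℂ) v) * hu + (r : ℂ) * hvc
    - ((starRingEnd ℂ) μ * (starRingEnd ℂ) u) * hv - (s : ℂ) * huc

theorem aeval_mul_aeval_conj_comm_of_mem_Vspace {n : ℕ} {μ ξ : ℂ} (hμ : μ ≠ 0) {f g : ℚ[X]}
    (hf : f ∈ Vspace n μ ξ) (hg : g ∈ Vspace n μ ξ) :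
    aeval ξ f * aeval ((starRingEnd ℂ) ξ) g = aeval ((starRingEnd ℂ) ξ) f * aeval ξ g := by
  obtain ⟨-, r, hr⟩ := hf
  obtain ⟨-, s, hs⟩ := hg
  have hconj (p : ℚ[X]) : aeval ((starRingEnd ℂ) ξ) p = (starRingEnd ℂ) (aeval ξ p) :=
    aeval_algHom_apply (starRingEnd ℂ).toRatAlgHom ξ p
  rw [hconj, hconj]
  exact Complex.mul_conj_eq_conj_mul_of_mul_eq_ofReal hμ hr hs

theorem lin_dep_of_large_tdeg_two_general (ξ : ℂ) (hξreal : ξ.im ≠ 0)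
    (ht : 3 < 2 * tdeg 2 ξ) :
    ∃ a b c : ℚ, ¬(a = 0 ∧ b = 0 ∧ c = 0) ∧
      (a : ℂ) + (b : ℂ) * (ξ + (starRingEnd ℂ) ξ)
        + (c : ℂ) * (ξ * (starRingEnd ℂ) ξ) = 0 := by
  obtain ⟨μ, hμ, hdim⟩ := Nat.sSup_mem_of_ne_zero (s := {d | ∃ μ : ℂ, μ ≠ 0 ∧
    d = finrank ℚ (Vspace 2 μ ξ)}) (show tdeg 2 ξ ≠ 0 by omega)
  obtain ⟨f, hf, g, hg, hfg⟩ :=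
    Submodule.exists_linearIndependent_pair_of_two_le_finrank (p := Vspace 2 μ ξ)
      ((show 2 ≤ tdeg 2 ξ by omega).trans_eq hdim)
  have hx := cross_coeff_ne_zero_of_linearIndependent hf.1 hg.1 hfg
  set x := (fun j : Fin 3 ↦ f.coeff j) ⨯₃ (fun j : Fin 3 ↦ g.coeff j)
  have hfactor := aeval_mul_aeval_sub_aeval_mul_aeval hf.1 hg.1 ξ ((starRingEnd ℂ) ξ)
  rw [aeval_mul_aeval_conj_comm_of_mem_Vspace hμ hf hg, sub_self, eq_comm] at hfactor
  have hξξ : (starRingEnd ℂ) ξ - ξ ≠ 0 :=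
    sub_ne_zero.mpr fun h ↦ hξreal (Complex.conj_eq_iff_im.mp h)
  refine ⟨x 2, -x 1, x 0, fun ⟨h2, h1, h0⟩ ↦ hx ?_, ?_⟩
  · funext j
    fin_cases j <;> simp_all
  · simpa [sub_eq_add_neg] using (mul_eq_zero.mp hfactor).resolve_left hξξ

theorem lin_dep_of_large_tdeg_two (ξ : ℂ) (hξreal : ξ.im ≠ 0)
    (hξalg : IsAlgebraic ℚ ξ) (hdeg : 2 < (minpoly ℚ ξ).natDegree)
    (ht : 3 < 2 * tdeg 2 ξ) :
    ∃ a b c : ℚ, ¬(a = 0 ∧ b = 0 ∧ c = 0) ∧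
      (a : ℂ) + (b : ℂ) * (ξ + (starRingEnd ℂ) ξ)
        + (c : ℂ) * (ξ * (starRingEnd ℂ) ξ) = 0 :=
  lin_dep_of_large_tdeg_two_general ξ hξreal ht
end

section
/- Let A, B ∈ ℚ[X] be linearly independent polynomials with deg A < deg B, and let ξ be a complex algebraic number of degree greater than deg A + deg B − 1. If A(ξ)·B'(ξ) − A'(ξ)·B(ξ) = 0, then a contradiction follows; that is, A(ξ)B'(ξ) − A'(ξ)B(ξ) ≠ 0. -/
/-!
The Wronskian `W = AB' - A'B` vanishes at `ξ`, so the minimal polynomial of `ξ` divides it. But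
`W ≠ 0`, because its coefficient of `X ^ (deg A + deg B - 1)` is `lc A · lc B · (deg B - deg A)`,
and `deg W < deg A + deg B`; this contradicts the degree bound on the minimal polynomial.
-/

open Polynomial

namespace Polynomial

variable {R : Type*}

theorem coeff_mul_derivative_natDegree_add_sub_one [CommSemiring R] (a b : R[X]) :
    (a * derivative b).coeff (a.natDegree + b.natDegree - 1) =
      a.leadingCoeff * b.leadingCoeff * b.natDegree := by
  cases hb : b.natDegree with
  | zero => simp [derivative_of_natDegree_zero hb]
  | succ n =>
    have hb' : (derivative b).natDegree ≤ n := by simpa [hb] using natDegree_derivative_le b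
    rw [Nat.add_succ_sub_one, coeff_mul_add_eq_of_natDegree_le le_rfl hb', coeff_derivative,
      leadingCoeff, leadingCoeff, hb]
    push_cast
    ring

theorem coeff_wronskian_natDegree_add_sub_one [CommRing R] (a b : R[X]) :
    (wronskian a b).coeff (a.natDegree + b.natDegree - 1) =
      a.leadingCoeff * b.leadingCoeff * (b.natDegree - a.natDegree) := by
  rw [wronskian, coeff_sub, coeff_mul_derivative_natDegree_add_sub_one, mul_comm (derivative a),
    add_comm a.natDegree, coeff_mul_derivative_natDegree_add_sub_one]
  ring

theorem wronskian_ne_zero_of_natDegree_lt [CommRing R] [NoZeroDivisors R] [CharZero R]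
    {a b : R[X]} (ha : a ≠ 0) (hab : a.natDegree < b.natDegree) : wronskian a b ≠ 0 := by
  have hb : b ≠ 0 := ne_zero_of_natDegree_gt hab
  refine fun hw => ?_
  have htop := coeff_wronskian_natDegree_add_sub_one a b
  rw [hw, coeff_zero, eq_comm] at htop
  have hdeg : (b.natDegree : R) - a.natDegree ≠ 0 := by
    rw [sub_ne_zero]; exact_mod_cast hab.ne'
  exact mul_ne_zero (mul_ne_zero (leadingCoeff_ne_zero.2 ha) (leadingCoeff_ne_zero.2 hb)) hdeg htop

end Polynomial

theorem wronskian_ne_zero_at_high_degree_algebraic_general (A B : ℚ[X])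
    (hAB : LinearIndependent ℚ ![A, B]) (hdegAB : A.natDegree < B.natDegree)
    (ξ : ℂ)
    (hdeg : A.natDegree + B.natDegree - 1 < (minpoly ℚ ξ).natDegree) :
    aeval ξ A * aeval ξ (derivative B) - aeval ξ (derivative A) * aeval ξ B ≠ 0 := by
  have hW : wronskian A B ≠ 0 :=
    wronskian_ne_zero_of_natDegree_lt (by simpa using hAB.ne_zero 0) hdegAB
  intro hξ
  have hroot : aeval ξ (wronskian A B) = 0 := by simpa [wronskian] using hξ
  have hminpoly_le := natDegree_le_of_dvd (minpoly.dvd ℚ ξ hroot) hW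
  have hW_lt := natDegree_wronskian_lt_add hW
  omega

theorem wronskian_ne_zero_at_high_degree_algebraic (A B : ℚ[X])
    (hAB : LinearIndependent ℚ ![A, B]) (hdegAB : A.natDegree < B.natDegree)
    (ξ : ℂ) (hξalg : IsAlgebraic ℚ ξ)
    (hdeg : A.natDegree + B.natDegree - 1 < (minpoly ℚ ξ).natDegree) :
    aeval ξ A * aeval ξ (derivative B) - aeval ξ (derivative A) * aeval ξ B ≠ 0 :=
  wronskian_ne_zero_at_high_degree_algebraic_general A B hAB hdegAB ξ hdeg
end
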